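/- Let m and k be integers with m ≥ 1, and suppose that one of the following three conditions holds: (A.1) k − m ≡ 0 (mod 3) and k − m ≥ 9; (A.2) k − m ≡ 1 (mod 3) and k − m ≥ 1; (A.3) k − m ≡ 2 (mod 3) and k − m ≥ 5. Then there exist integer vectors a = (a₁, a₂, a₃, a₄) ∈ ℤ⁴ and b = (b₁, …, b_{2m}) ∈ ℤ^{2m} such that every entry bⱼ belongs to {1, 3} (in particular every bⱼ is nonzero), the sum a₁ + a₂ + a₃ + a₄ + b₁ + ⋯ + b_{2m} is even, and 3·(a₁² + a₂² + a₃² + a₄²) + (b₁² + ⋯ + b_{2m}²) = 2k − 2. -/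

import Mathlib

/-!
Take `c ∈ {0, 1, 2}` entries of `b` equal to `3` and the others equal to `1`; then
`∑ b = 2m + 2c` is even and `∑ b² = 2m + 8c`. The congruence condition on `k - m` is exactly
what makes `k - m = 4c + 1 + 3q` with `q ≥ 0`, leaving `3 ∑ a² = 6q`, and Lagrange's theorem
writes `2q` as a sum of four squares. Since `x² ≡ x (mod 2)`, `∑ a ≡ ∑ a² = 2q` is even too.
-/

open Finset

theorem Int.even_sum_sq_iff {ι : Type*} (s : Finset ι) (f : ι → ℤ) :
    Even (∑ i ∈ s, f i ^ 2) ↔ Even (∑ i ∈ s, f i) := by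
  have hdiff : Even (∑ i ∈ s, f i ^ 2 - ∑ i ∈ s, f i) := by
    rw [← sum_sub_distrib]
    exact even_sum _ fun i _ => by simpa [sq, mul_sub] using Int.even_mul_pred_self (f i)
  constructor
  · intro h; simpa using h.sub hdiff
  · intro h; simpa using hdiff.add h

theorem Int.exists_fin_four_sum_sq_eq (n : ℕ) : ∃ a : Fin 4 → ℤ, ∑ i, a i ^ 2 = n := by
  obtain ⟨w, x, y, z, h⟩ := Nat.sum_four_squares n
  exact ⟨![w, x, y, z], by simp [Fin.sum_univ_four, ← h]⟩

def threesThenOnes (n c : ℕ) : Fin n → ℤ := fun j => if (j : ℕ) < c then 3 else 1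

theorem threesThenOnes_mem (n c : ℕ) (j : Fin n) :
    threesThenOnes n c j = 1 ∨ threesThenOnes n c j = 3 := by
  unfold threesThenOnes
  split_ifs <;> simp

theorem sum_threesThenOnes_pow {n c : ℕ} (hc : c ≤ n) (p : ℕ) :
    ∑ j, threesThenOnes n c j ^ p = c * 3 ^ p + (n - c : ℕ) := by
  obtain ⟨d, rfl⟩ := Nat.exists_eq_add_of_le hc
  unfold threesThenOnes
  rw [Fin.sum_univ_eq_sum_range (fun j => (if j < c then 3 else 1 : ℤ) ^ p), sum_range_add]
  have hthrees : ∀ j ∈ range c, (if j < c then 3 else 1 : ℤ) ^ p = 3 ^ p := fun j hj => by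
    rw [if_pos (mem_range.1 hj)]
  have hones : ∀ j ∈ range d, (if c + j < c then 3 else 1 : ℤ) ^ p = 1 := fun j _ => by
    rw [if_neg (by omega), one_pow]
  rw [sum_congr rfl hthrees, sum_congr rfl hones]
  simp

theorem exists_eq_four_mul_add_one_add_three_mul (d : ℤ)
    (h : (d % 3 = 0 ∧ 9 ≤ d) ∨ (d % 3 = 1 ∧ 1 ≤ d) ∨ (d % 3 = 2 ∧ 5 ≤ d)) :
    ∃ c q : ℕ, c ≤ 2 ∧ d = 4 * c + 1 + 3 * q := by
  rcases h with ⟨h3, hd⟩ | ⟨h3, hd⟩ | ⟨h3, hd⟩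
  · exact ⟨2, ((d - 9) / 3).toNat, by omega, by omega⟩
  · exact ⟨0, ((d - 1) / 3).toNat, by omega, by omega⟩
  · exact ⟨1, ((d - 5) / 3).toNat, by omega, by omega⟩

/-- Solvability (dimension `4m` case): under the stated congruence and size
conditions on `k - m`, there exist `a ∈ ℤ⁴` and `b ∈ ℤ^{2m}` with all `bⱼ ∈ {1, 3}`,
`Σaᵢ + Σbⱼ` even, and `3‖a‖² + ‖b‖² = 2k - 2`. -/
theorem stringc_witten_index_exists_4m (m : ℕ) (hm : 1 ≤ m) (k : ℤ)
    (h : ((k - (m : ℤ)) % 3 = 0 ∧ 9 ≤ k - (m : ℤ)) ∨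
         ((k - (m : ℤ)) % 3 = 1 ∧ 1 ≤ k - (m : ℤ)) ∨
         ((k - (m : ℤ)) % 3 = 2 ∧ 5 ≤ k - (m : ℤ))) :
    ∃ (a : Fin 4 → ℤ) (b : Fin (2 * m) → ℤ),
      (∀ j, b j = 1 ∨ b j = 3) ∧
      Even ((∑ i, a i) + ∑ j, b j) ∧
      3 * (∑ i, (a i) ^ 2) + (∑ j, (b j) ^ 2) = 2 * k - 2 := by
  obtain ⟨c, q, hc, hkq⟩ := exists_eq_four_mul_add_one_add_three_mul _ h
  obtain ⟨a, ha⟩ := Int.exists_fin_four_sum_sq_eq (2 * q)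
  have hcm : c ≤ 2 * m := by omega
  have hb := sum_threesThenOnes_pow hcm
  refine ⟨a, threesThenOnes (2 * m) c, threesThenOnes_mem _ _, ?_, ?_⟩
  · have heven_a : Even (∑ i, a i) := (Int.even_sum_sq_iff _ a).1 (by simp [ha])
    have hb1 := hb 1
    simp only [pow_one] at hb1
    rw [hb1]
    push_cast [hcm]
    exact heven_a.add ⟨c + m, by ring⟩
  · rw [ha, hb 2]
    push_cast [hcm]
    linarith
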